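/- Under the multidimensional moment-quadrature setup, for every multi-index n ∈ ℕ^d with |n| ≤ 2N−1, one has e₀ᵀ (Ĥ_1^{n_1} Ĥ_2^{n_2} ⋯ Ĥ_d^{n_d}) e₀ = ∫ x^n dμ(x), where the matrix product is taken in order of increasing coordinate index. -/

import Mathlib

/-!
Write `w u := Lᵀ e_u`. Because `G = L Lᵀ`, the identity `H_a e_u = G e_{u'}` for
`n_{u'} = n_u + e_a` (both columns list the moments of `x_a x^{n_u}`) turns into
`Ĥ_a w_u = w_{u'}`: on the vectors `w`, `Ĥ_a` acts as multiplication by `x_a` as long as the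
degree stays below `N`. So a word of length `≤ N - 1` in the `Ĥ_a` carries `w_0` to the `w_u`
whose multi-index counts the letters. A word of length `≤ 2N - 1` splits as `t a r` with
`|t|, |r| ≤ N - 1`; since the `Ĥ_a` are symmetric,
`w_0 ⬝ Ĥ_t Ĥ_a Ĥ_r w_0 = w_{u_t} ⬝ Ĥ_a w_{u_r} = (H_a)_{u_t u_r}`, the required moment.
Finally `w_0 = L₀₀ e₀` as `L` is lower triangular, and `L₀₀² = G₀₀ = 1`.
-/

open MeasureTheory Matrix Finset

theorem List.sum_count_eq_length {α : Type*} [Fintype α] [DecidableEq α] (l : List α) :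
    ∑ a, l.count a = l.length := by
  simpa using Multiset.sum_count_eq_card (s := univ) (m := (l : Multiset α)) (by simp)

theorem List.exists_eq_append_cons_of_length_le {α : Type*} {l : List α} {D : ℕ}
    (hpos : 0 < l.length) (hl : l.length ≤ 2 * D + 1) :
    ∃ t a r, l = t ++ a :: r ∧ t.length ≤ D ∧ r.length ≤ D := by
  obtain ⟨a, r, hr⟩ := List.exists_cons_of_length_pos
    (l := l.drop (min D (l.length - 1))) (by simp; omega)
  refine ⟨l.take (min D (l.length - 1)), a, r, by rw [← hr, List.take_append_drop], by simp, ?_⟩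
  have := congrArg List.length hr
  simp at this
  omega

theorem mul_prod_pow_eq_prod_pow_add_single {ι M : Type*} [Fintype ι] [DecidableEq ι]
    [CommMonoid M] (x : ι → M) (k : ι → ℕ) (a : ι) :
    x a * ∏ j, x j ^ k j = ∏ j, x j ^ (k + Pi.single a 1 : ι → ℕ) j := by
  simp only [Pi.add_apply, pow_add, prod_mul_distrib, mul_comm (x a)]
  congr 1
  rw [Fintype.prod_eq_single a fun j hj => by simp [hj], Pi.single_eq_same, pow_one]

theorem List.prod_map_flatMap_replicate {α M : Type*} [Monoid M] (l : List α) (k : α → ℕ)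
    (f : α → M) :
    ((l.flatMap fun i => List.replicate (k i) i).map f).prod = (l.map fun i => f i ^ k i).prod := by
  induction l with
  | nil => rfl
  | cons a l ih => simp [ih]

theorem List.count_flatMap_finRange_replicate {d : ℕ} (k : Fin d → ℕ) (i : Fin d) :
    ((List.finRange d).flatMap fun j => List.replicate (k j) j).count i = k i := by
  simp [List.count_flatMap, List.count_replicate, Function.comp_def, ← Fin.sum_univ_def]

namespace Matrix

variable {n R : Type*} [Fintype n]

theorem transpose_mulVec_dotProduct_transpose_mulVec [CommRing R] (L : Matrix n n R)
    (x y : n → R) :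
    (Lᵀ *ᵥ x) ⬝ᵥ (Lᵀ *ᵥ y) = x ⬝ᵥ ((L * Lᵀ) *ᵥ y) := by
  rw [mulVec_transpose, ← dotProduct_mulVec, mulVec_mulVec]

variable [DecidableEq n]

theorem dotProduct_list_prod_mulVec_of_isSymm [CommSemiring R] {l : List (Matrix n n R)}
    (hl : ∀ A ∈ l, A.IsSymm) (v w : n → R) :
    v ⬝ᵥ (l.prod *ᵥ w) = (l.reverse.prod *ᵥ v) ⬝ᵥ w := by
  rw [dotProduct_mulVec, ← mulVec_transpose, transpose_list_prod,
    List.map_congr_left fun A hA => (hl A hA).eq, List.map_id']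

theorem exists_list_prod_mulVec_eq [Semiring R] {m d : Type*} [Fintype d] [DecidableEq d]
    {A : d → Matrix n n R} {w : m → n → R} {κ : m → d → ℕ} {D : ℕ}
    (hsurj : ∀ k : d → ℕ, ∑ i, k i ≤ D → ∃ u, κ u = k)
    (hstep : ∀ a u u', κ u' = κ u + Pi.single a 1 → A a *ᵥ w u = w u')
    {u₀ : m} (hu₀ : κ u₀ = 0) :
    ∀ l : List d, l.length ≤ D → ∃ u, κ u = (fun i => l.count i) ∧ (l.map A).prod *ᵥ w u₀ = w u
  | [], _ => ⟨u₀, hu₀, by simp⟩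
  | a :: l, hl => by
    obtain ⟨u, hu, hAu⟩ := exists_list_prod_mulVec_eq hsurj hstep hu₀ l
      (Nat.le_of_succ_le hl)
    obtain ⟨u', hu'⟩ := hsurj (fun i => (a :: l).count i) (by rwa [List.sum_count_eq_length])
    refine ⟨u', hu', ?_⟩
    rw [List.map_cons, List.prod_cons, ← mulVec_mulVec, hAu, hstep a u u']
    ext i
    simp [hu', hu, List.count_cons, Pi.single_apply, eq_comm (a := i)]

theorem transpose_mulVec_single_of_lower_triangular [LinearOrder n] [CommSemiring R]
    {L : Matrix n n R} (hL : ∀ u v, u < v → L u v = 0) {u₀ : n} (hu₀ : ∀ v, u₀ ≤ v) :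
    Lᵀ *ᵥ Pi.single u₀ 1 = L u₀ u₀ • Pi.single u₀ 1 := by
  ext v
  rcases (hu₀ v).eq_or_lt with rfl | hv
  · simp
  · simp [hL u₀ v hv, hv.ne']

variable [CommRing R] {L : Matrix n n R}

theorem IsSymm.inv_mul_mul_transpose_inv {H : Matrix n n R} (hH : H.IsSymm) (L : Matrix n n R) :
    (L⁻¹ * H * Lᵀ⁻¹).IsSymm := by
  simp [IsSymm, transpose_mul, transpose_nonsing_inv, hH.eq, Matrix.mul_assoc]

theorem inv_mul_mul_transpose_inv_mulVec_transpose_mulVec (hL : IsUnit L.det)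
    (H : Matrix n n R) (x : n → R) :
    (L⁻¹ * H * Lᵀ⁻¹) *ᵥ (Lᵀ *ᵥ x) = L⁻¹ *ᵥ (H *ᵥ x) := by
  rw [mulVec_mulVec, Matrix.mul_assoc, nonsing_inv_mul _ (by rwa [det_transpose]), mul_one,
    mulVec_mulVec]

theorem inv_mul_mul_transpose_inv_mulVec_transpose_mulVec_of_mulVec_eq (hL : IsUnit L.det)
    {H : Matrix n n R} {x y : n → R} (h : H *ᵥ x = (L * Lᵀ) *ᵥ y) :
    (L⁻¹ * H * Lᵀ⁻¹) *ᵥ (Lᵀ *ᵥ x) = Lᵀ *ᵥ y := by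
  rw [inv_mul_mul_transpose_inv_mulVec_transpose_mulVec hL, h, mulVec_mulVec, ← Matrix.mul_assoc,
    nonsing_inv_mul _ hL, one_mul]

theorem transpose_mulVec_dotProduct_inv_mul_mul_transpose_inv_mulVec (hL : IsUnit L.det)
    (H : Matrix n n R) (x y : n → R) :
    (Lᵀ *ᵥ x) ⬝ᵥ ((L⁻¹ * H * Lᵀ⁻¹) *ᵥ (Lᵀ *ᵥ y)) = x ⬝ᵥ (H *ᵥ y) := by
  rw [inv_mul_mul_transpose_inv_mulVec_transpose_mulVec hL, mulVec_transpose, ← dotProduct_mulVec,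
    mulVec_mulVec, mul_nonsing_inv _ hL, one_mulVec]

end Matrix

section MomentMatrices

variable {n d R : Type*} {ι : n → d → ℕ} {m : (d → ℕ) → R} {G : Matrix n n R}
  {H : d → Matrix n n R}

theorem hankel_mulVec_single_eq_mulVec_single [Fintype n] [DecidableEq n] [DecidableEq d]
    [CommRing R] (hG : ∀ u v, G u v = m (ι u + ι v))
    (hH : ∀ a u v, H a u v = m (ι u + ι v + Pi.single a 1)) {a : d} {u u' : n}
    (h : ι u' = ι u + Pi.single a 1) :
    H a *ᵥ Pi.single u 1 = G *ᵥ Pi.single u' 1 := by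
  ext v
  simp [hG, hH, h, add_assoc]

theorem isSymm_hankel [DecidableEq d] (hH : ∀ a u v, H a u v = m (ι u + ι v + Pi.single a 1))
    (a : d) :
    (H a).IsSymm :=
  IsSymm.ext fun u v => by rw [hH, hH, add_comm (ι u)]

theorem transpose_mulVec_dotProduct_list_prod_mulVec_eq [Fintype n] [DecidableEq n] [Fintype d]
    [DecidableEq d] [CommRing R] {D : ℕ}
    (hsurj : ∀ k : d → ℕ, ∑ i, k i ≤ D → ∃ u, ι u = k)
    (hG : ∀ u v, G u v = m (ι u + ι v))
    (hH : ∀ a u v, H a u v = m (ι u + ι v + Pi.single a 1))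
    {L : Matrix n n R} (hL : IsUnit L.det) (hLLT : L * Lᵀ = G) {u₀ : n} (hu₀ : ι u₀ = 0)
    {l : List d} (hl : l.length ≤ 2 * D + 1) :
    (Lᵀ *ᵥ Pi.single u₀ 1) ⬝ᵥ
        ((l.map fun a => L⁻¹ * H a * Lᵀ⁻¹).prod *ᵥ (Lᵀ *ᵥ Pi.single u₀ 1)) =
      m fun i => l.count i := by
  have walk := exists_list_prod_mulVec_eq (w := fun u => Lᵀ *ᵥ Pi.single u 1) hsurj
    (fun a u u' h => inv_mul_mul_transpose_inv_mulVec_transpose_mulVec_of_mulVec_eq hL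
      (hLLT ▸ hankel_mulVec_single_eq_mulVec_single hG hH h)) hu₀
  rcases l.length.eq_zero_or_pos with hl0 | hpos
  · rw [List.length_eq_zero_iff.mp hl0, List.map_nil, List.prod_nil, one_mulVec,
      transpose_mulVec_dotProduct_transpose_mulVec, hLLT, single_one_dotProduct,
      mulVec_single_one, col_apply, hG, hu₀]
    rfl
  obtain ⟨t, a, r, rfl, ht, hr⟩ := List.exists_eq_append_cons_of_length_le hpos hl
  obtain ⟨ut, hut, hPt⟩ := walk t.reverse (by rwa [List.length_reverse])
  obtain ⟨ur, hur, hPr⟩ := walk r hr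
  have hsymm : ∀ A ∈ t.map fun a => L⁻¹ * H a * Lᵀ⁻¹, A.IsSymm := by
    simpa using fun a _ => (isSymm_hankel hH a).inv_mul_mul_transpose_inv L
  rw [List.map_append, List.prod_append, ← mulVec_mulVec,
    dotProduct_list_prod_mulVec_of_isSymm hsymm, ← List.map_reverse, hPt, List.map_cons,
    List.prod_cons, ← mulVec_mulVec, hPr,
    transpose_mulVec_dotProduct_inv_mul_mul_transpose_inv_mulVec hL, mulVec_single_one,
    single_one_dotProduct, col_apply, hH, hut, hur]
  congr 1
  ext i
  simp [List.count_cons, Pi.single_apply, eq_comm (a := i), add_assoc]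

end MomentMatrices

theorem moment_quadrature_operator_moments_general
    (d N S : ℕ)
    (μ : Measure (Fin d → ℝ)) [IsProbabilityMeasure μ]
    (ι : Fin S → (Fin d → ℕ))
    (hι_surj : ∀ n : Fin d → ℕ, (∑ i, n i) ≤ N - 1 → ∃ u, ι u = n)
    (hι0 : ∀ u : Fin S, (u : ℕ) = 0 → ι u = 0)
    (G : Matrix (Fin S) (Fin S) ℝ)
    (hG : ∀ u v, G u v = ∫ x, ∏ i, x i ^ (ι u i + ι v i) ∂μ)
    (hGpd : G.PosDef)
    (L : Matrix (Fin S) (Fin S) ℝ)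
    (hL_lower : ∀ u v : Fin S, u < v → L u v = 0)
    (hLLT : L * L.transpose = G)
    (H : Fin d → Matrix (Fin S) (Fin S) ℝ)
    (hH : ∀ i u v, H i u v = ∫ x, x i * ∏ j, x j ^ (ι u j + ι v j) ∂μ)
    (Hhat : Fin d → Matrix (Fin S) (Fin S) ℝ)
    (hHhat : ∀ i, Hhat i = L⁻¹ * H i * (L.transpose)⁻¹)
    (e₀ : Fin S → ℝ)
    (he₀ : ∀ j : Fin S, e₀ j = if (j : ℕ) = 0 then (1 : ℝ) else 0) :
    ∀ n : Fin d → ℕ, (∑ i, n i) ≤ 2 * N - 1 →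
      e₀ ⬝ᵥ ((((List.finRange d).map fun i => Hhat i ^ n i).prod) *ᵥ e₀)
        = ∫ x, ∏ i, x i ^ n i ∂μ := by
  intro n hn
  let mom : (Fin d → ℕ) → ℝ := fun k => ∫ x, ∏ i, x i ^ k i ∂μ
  have hS : 0 < S := (hι_surj 0 (by simp)).elim fun u _ => u.pos
  set u₀ : Fin S := ⟨0, hS⟩
  have he₀ : e₀ = Pi.single u₀ 1 := by
    ext j
    simp [he₀, Pi.single_apply, Fin.ext_iff, u₀]
  have hL : IsUnit L.det := isUnit_iff_ne_zero.2 fun h => hGpd.det_pos.ne' <| by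
    rw [← hLLT, det_mul, h, zero_mul]
  have hH' : ∀ a u v, H a u v = mom (ι u + ι v + Pi.single a 1) := fun a u v => by
    simp only [hH, mom, mul_prod_pow_eq_prod_pow_add_single]
    rfl
  have moments (l : List (Fin d)) (hl : l.length ≤ 2 * (N - 1) + 1) :=
    transpose_mulVec_dotProduct_list_prod_mulVec_eq hι_surj (m := mom) hG hH' hL hLLT
      (hι0 u₀ rfl) hl
  have hc := transpose_mulVec_single_of_lower_triangular hL_lower (u₀ := u₀)
    fun v => Nat.zero_le _
  have hcc : L u₀ u₀ * L u₀ u₀ = 1 := by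
    simpa [hc, mom] using moments [] (by simp)
  have hmoment := moments ((List.finRange d).flatMap fun i => List.replicate (n i) i)
    (by simp [← Fin.sum_univ_def]; omega)
  simp only [hc, ← hHhat, List.prod_map_flatMap_replicate, List.count_flatMap_finRange_replicate,
    mulVec_smul, smul_dotProduct, dotProduct_smul, smul_eq_mul, ← mul_assoc, hcc, one_mul]
    at hmoment
  rw [he₀, hmoment]

/-- Under the multidimensional moment-quadrature setup, for every multi-index
`n` with `|n| ≤ 2N - 1`, one has `e₀ᵀ (Ĥ₁^{n₁} Ĥ₂^{n₂} ⋯ Ĥ_d^{n_d}) e₀ = ∫ xⁿ dμ`, the matrix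
product being taken in order of increasing coordinate index. -/
theorem moment_quadrature_operator_moments
    (d N S : ℕ) (hd : 1 ≤ d) (hN : 1 ≤ N)
    (hS : S = Nat.choose (N - 1 + d) d)
    (μ : Measure (Fin d → ℝ)) [IsProbabilityMeasure μ]
    (hmom : ∀ n : Fin d → ℕ, (∑ i, n i) ≤ 2 * N - 1 →
      Integrable (fun x => ∏ i, x i ^ n i) μ)
    (ι : Fin S → (Fin d → ℕ))
    (hι_inj : Function.Injective ι)
    (hι_deg : ∀ u, (∑ i, ι u i) ≤ N - 1)
    (hι_surj : ∀ n : Fin d → ℕ, (∑ i, n i) ≤ N - 1 → ∃ u, ι u = n)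
    (hι0 : ∀ u : Fin S, (u : ℕ) = 0 → ι u = 0)
    (G : Matrix (Fin S) (Fin S) ℝ)
    (hG : ∀ u v, G u v = ∫ x, ∏ i, x i ^ (ι u i + ι v i) ∂μ)
    (hGpd : G.PosDef)
    (L : Matrix (Fin S) (Fin S) ℝ)
    (hL_lower : ∀ u v : Fin S, u < v → L u v = 0)
    (hLLT : L * L.transpose = G)
    (H : Fin d → Matrix (Fin S) (Fin S) ℝ)
    (hH : ∀ i u v, H i u v = ∫ x, x i * ∏ j, x j ^ (ι u j + ι v j) ∂μ)
    (Hhat : Fin d → Matrix (Fin S) (Fin S) ℝ)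
    (hHhat : ∀ i, Hhat i = L⁻¹ * H i * (L.transpose)⁻¹)
    (e₀ : Fin S → ℝ)
    (he₀ : ∀ j : Fin S, e₀ j = if (j : ℕ) = 0 then (1 : ℝ) else 0) :
    ∀ n : Fin d → ℕ, (∑ i, n i) ≤ 2 * N - 1 →
      e₀ ⬝ᵥ ((((List.finRange d).map fun i => Hhat i ^ n i).prod) *ᵥ e₀)
        = ∫ x, ∏ i, x i ^ n i ∂μ :=
  moment_quadrature_operator_moments_general d N S μ ι hι_surj hι0 G hG hGpd L hL_lower hLLT H hH
    Hhat hHhat e₀ he₀
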